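/- Let w ∈ G(m, p, n) be arbitrary and u ∈ [id, w]_{cdf}. Then: (1) codimfix(u) + codimfix(u⁻¹w) = n + c(w) − 2·|Π_u(w)| + #{parts of Π_u(w) of nonzero total weight}; and (2) every part of Π_u(w) is either a singleton or consists of exactly two cycles of w whose weights are nonzero and sum to 0 in ℤ/mℤ. -/

import Mathlib

open Equiv Finset
@[ext]
structure GW (m n : ℕ) where
  perm : Equiv.Perm (Fin n)
  wt : Fin n → ZMod m
namespace GW
variable {m n : ℕ}
instance : Mul (GW m n) :=
  ⟨fun x y => ⟨x.perm * y.perm, fun i => x.wt i + y.wt (x.perm⁻¹ i)⟩⟩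
instance : One (GW m n) := ⟨⟨1, 0⟩⟩
instance : Inv (GW m n) := ⟨fun x => ⟨x.perm⁻¹, fun i => -x.wt (x.perm i)⟩⟩
@[simp] theorem mul_perm (x y : GW m n) : (x * y).perm = x.perm * y.perm := rfl
@[simp] theorem mul_wt (x y : GW m n) (i : Fin n) :
    (x * y).wt i = x.wt i + y.wt (x.perm⁻¹ i) := rfl
@[simp] theorem one_perm : (1 : GW m n).perm = 1 := rfl
@[simp] theorem one_wt (i : Fin n) : (1 : GW m n).wt i = 0 := rfl
@[simp] theorem inv_perm (x : GW m n) : (x⁻¹).perm = x.perm⁻¹ := rfl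
@[simp] theorem inv_wt (x : GW m n) (i : Fin n) : (x⁻¹).wt i = -x.wt (x.perm i) := rfl
private theorem gw_mul_assoc (a b c : GW m n) : a * b * c = a * (b * c) := by
  ext i
  · simp [mul_assoc]
  · simp [mul_inv_rev, add_assoc]
private theorem gw_one_mul (a : GW m n) : 1 * a = a := by ext i <;> simp
private theorem gw_mul_one (a : GW m n) : a * 1 = a := by ext i <;> simp
private theorem gw_inv_mul_cancel (a : GW m n) : a⁻¹ * a = 1 := by ext i <;> simp
instance : Group (GW m n) where
  mul := (· * ·)
  one := 1
  inv := Inv.inv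
  mul_assoc := gw_mul_assoc
  one_mul := gw_one_mul
  mul_one := gw_mul_one
  inv_mul_cancel := gw_inv_mul_cancel
def cycleOf (w : GW m n) (i : Fin n) : Finset (Fin n) :=
  Finset.univ.filter fun j => w.perm.SameCycle i j
def cycles (w : GW m n) : Finset (Finset (Fin n)) :=
  Finset.univ.image fun i => w.cycleOf i
def cycWt (w : GW m n) (C : Finset (Fin n)) : ZMod m := ∑ i ∈ C, w.wt i
def numCycles (w : GW m n) : ℕ := (cycles w).card
def c0 (w : GW m n) : ℕ := ((cycles w).filter fun C => cycWt w C = 0).card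
def codimfix (w : GW m n) : ℕ := n - c0 w
def wtTot (w : GW m n) : ZMod m := ∑ i, w.wt i

-- NEW PIECES BELOW --

/-- The base relation on cycles of `w` induced by `u`: two cycles of `w` are related if
some cycle of `u` meets both of them. -/
def piRelBase (u w : GW m n) (C₁ C₂ : Finset (Fin n)) : Prop :=
  C₁ ∈ cycles w ∧ C₂ ∈ cycles w ∧ ∃ D ∈ cycles u, (D ∩ C₁).Nonempty ∧ (D ∩ C₂).Nonempty

/-- The equivalence relation on the cycles of `w` generated by `piRelBase`. -/
def piRel (u w : GW m n) : Finset (Fin n) → Finset (Fin n) → Prop :=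
  Relation.EqvGen (piRelBase u w)

open Classical in
/-- The part of the partition `Π_u(w)` containing the cycle `C` of `w`. -/
noncomputable def piPart (u w : GW m n) (C : Finset (Fin n)) : Finset (Finset (Fin n)) :=
  (cycles w).filter fun C' => piRel u w C C'

/-- The set partition `Π_u(w)` of the cycles of `w`, as the set of its parts. -/
noncomputable def piParts (u w : GW m n) : Finset (Finset (Finset (Fin n))) :=
  (cycles w).image fun C => piPart u w C

/-- The weight of a collection `B` of cycles: the sum of the weights of its cycles. -/
def partWt (w : GW m n) (B : Finset (Finset (Fin n))) : ZMod m :=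
  ∑ C ∈ B, cycWt w C

open Classical in
/-- The number of parts of `Π_u(w)` of nonzero total weight. -/
noncomputable def piPartsNonzeroWt (u w : GW m n) : ℕ :=
  ((piParts u w).filter fun B => partWt w B ≠ 0).card

/-- The support of a collection of cycles: the union of the cycles' underlying sets. -/
def supp (B : Finset (Finset (Fin n))) : Finset (Fin n) := B.sup id

/-- Restriction of a permutation to an invariant set `A` (junk value `1` if `A` is
not invariant): it agrees with `σ` on `A` and is the identity off `A`. -/
noncomputable def restrictPerm (σ : Equiv.Perm (Fin n)) (A : Finset (Fin n)) :
    Equiv.Perm (Fin n) :=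
  if h : ∀ i, σ i ∈ A ↔ i ∈ A then
    { toFun := fun i => if i ∈ A then σ i else i
      invFun := fun i => if i ∈ A then σ.symm i else i
      left_inv := by
        intro i
        by_cases hi : i ∈ A
        · simp [hi, (h i).mpr hi]
        · simp [hi]
      right_inv := by
        intro j
        by_cases hj : j ∈ A
        · have hs : σ.symm j ∈ A := by
            have h2 := h (σ.symm j)
            rw [Equiv.apply_symm_apply] at h2
            exact h2.mp hj
          simp [hj, hs]
        · simp [hj] }
  else 1


/-- The restriction `x|_A` of `x` to a subset `A` of `{1,…,n}` (stabilized by `x`):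
it agrees with `x` on `A` and acts as the identity, with weight `0`, off `A`. -/
noncomputable def restrict (x : GW m n) (A : Finset (Fin n)) : GW m n :=
  ⟨restrictPerm x.perm A, fun i => if i ∈ A then x.wt i else 0⟩

/-- The cycles of `x` contained in `A`; for `x = y|_A` this gives the cycles of the
restriction of `y` to `A`, viewed as an element of `G(m,1,#A)`. -/
def cyclesIn (x : GW m n) (A : Finset (Fin n)) : Finset (Finset (Fin n)) :=
  (cycles x).filter fun C => C ⊆ A

/-- The monomial matrix representing `w`: the nonzero entry in column `j` sits in row
`w.perm j` and equals `ζ^(a_(w.perm j))`, where `ζ = exp(2πi/m)`. -/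
noncomputable def toMatrix (w : GW m n) : Matrix (Fin n) (Fin n) ℂ :=
  Matrix.of fun i j =>
    if w.perm j = i then Complex.exp (2 * Real.pi * Complex.I * ((w.wt i).val : ℂ) / (m : ℂ))
    else 0

/-- `S` (a set of cycles of `w`) can be partitioned into singletons whose weight is
`0 (mod p)` and pairs of cycles whose weights sum to `0` in `ℤ/mℤ`; encoded by an
involution pairing up the cycles. -/
def PairedUp (p : ℕ) (hpm : p ∣ m) (w : GW m n) (S : Finset (Finset (Fin n))) : Prop :=
  ∃ π : {C // C ∈ S} → {C // C ∈ S}, Function.Involutive π ∧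
    (∀ C, π C = C → ZMod.castHom hpm (ZMod p) (cycWt w C.1) = 0) ∧
    (∀ C, π C ≠ C → cycWt w C.1 + cycWt w (π C).1 = 0)

/-- Membership in `G(m,p,n)`: the total weight is `0 (mod p)`. -/
def Gmem (p : ℕ) (hpm : p ∣ m) (w : GW m n) : Prop :=
  ZMod.castHom hpm (ZMod p) (wtTot w) = 0

/-- A reflection of `G(m,p,n)`: an element of the group whose fixed space has codimension 1. -/
def IsRefl (p : ℕ) (hpm : p ∣ m) (t : GW m n) : Prop :=
  Gmem p hpm t ∧ codimfix t = 1

/-- The reflection length of `w` with respect to the reflections of `G(m,p,n)`. -/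
noncomputable def lR (p : ℕ) (hpm : p ∣ m) (w : GW m n) : ℕ :=
  sInf {k | ∃ l : List (GW m n), (∀ t ∈ l, IsRefl p hpm t) ∧ l.length = k ∧ l.prod = w}

/-- The order `≤_f` determined by a subadditive function `f`. -/
def leF (f : GW m n → ℕ) (x y : GW m n) : Prop := f x + f (x⁻¹ * y) = f y

/-- The interval `[id, w]_f` inside the poset `(G(m,p,n), ≤_f)`. -/
def interval (p : ℕ) (hpm : p ∣ m) (f : GW m n → ℕ) (w : GW m n) : Set (GW m n) :=
  {u | Gmem p hpm u ∧ leF f u w}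

/-- A vector `v ∈ ℂⁿ` is regular for `G(m,p,n)` if it is fixed by no reflection. -/
def IsRegularVec (p : ℕ) (hpm : p ∣ m) (v : Fin n → ℂ) : Prop :=
  ∀ t : GW m n, IsRefl p hpm t → (toMatrix t).mulVec v ≠ v

/-- An element `w ∈ G(m,p,n)` is regular if it has an eigenvector that is a regular vector. -/
def IsRegularElt (p : ℕ) (hpm : p ∣ m) (w : GW m n) : Prop :=
  ∃ v : Fin n → ℂ, v ≠ 0 ∧ (∃ c : ℂ, (toMatrix w).mulVec v = c • v) ∧ IsRegularVec p hpm v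

end GW

/-!
Write `v = u⁻¹ * w` and `N` for the number of parts of `Π_u(w)` of nonzero weight. Since
`codimfix x = n - c(x) + #(nonzero-weight cycles of x)`, two inequalities carry the proof.

Lower bound. The parts of `Π_u(w)` are the orbits of `⟨u, w⟩ = ⟨u, v⟩`, and nonnegativity of the
genus of the hypermap `(u, v, w⁻¹)` gives `c(u) + c(v) + c(w) ≤ n + 2 |Π_u(w)|`. The `w`-weight of
an orbit is the sum of its `u`- and `v`-weights, so a part of nonzero weight contains a cycle of
`u` or of `v` of nonzero weight, whence `N` is at most the number of such cycles. Together: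
`codimfix u + codimfix v ≥ n + c(w) - 2 |Π_u(w)| + N`.

Upper bound. Counting part by part, `codimfix w ≤ n + c(w) - 2 |Π_u(w)| + N`, with equality
exactly when every part is a singleton or a pair of nonzero cycles of opposite weights.

As `u ≤_cdf w` means `codimfix u + codimfix v = codimfix w`, both bounds are equalities.
-/

namespace Subgroup

variable {G : Type*} [Group G]

theorem closure_pair_mul_right (a t : G) : closure {t, a * t} = closure {t, a} := by
  refine le_antisymm ((closure_le _).2 ?_) ((closure_le _).2 ?_) <;>
    simp only [Set.insert_subset_iff, Set.singleton_subset_iff, SetLike.mem_coe]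
  · exact ⟨subset_closure (by simp),
      mul_mem (subset_closure (by simp)) (subset_closure (by simp))⟩
  · refine ⟨subset_closure (by simp), ?_⟩
    simpa using mul_mem (subset_closure (show a * t ∈ ({t, a * t} : Set G) by simp))
      (inv_mem (subset_closure (Set.mem_insert t {a * t})))

theorem closure_pair_mul_left (a t : G) : closure {t, t * a} = closure {t, a} := by
  refine le_antisymm ((closure_le _).2 ?_) ((closure_le _).2 ?_) <;>
    simp only [Set.insert_subset_iff, Set.singleton_subset_iff, SetLike.mem_coe]
  · exact ⟨subset_closure (by simp),
      mul_mem (subset_closure (by simp)) (subset_closure (by simp))⟩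
  · refine ⟨subset_closure (by simp), ?_⟩
    simpa using mul_mem (inv_mem (subset_closure (Set.mem_insert t {t * a})))
      (subset_closure (show t * a ∈ ({t, t * a} : Set G) by simp))

theorem closure_pair_inv_mul (a b : G) : closure {a, a⁻¹ * b} = closure {a, b} := by
  rw [← closure_pair_mul_left, mul_inv_cancel_left]

theorem closure_triple_mul (a b t : G) : closure {t, a * t, t * b} = closure {t, a, b} := by
  have (x y : G) : ({t, x, y} : Set G) = {t, x} ∪ {t, y} := by
    ext; simp only [Set.mem_insert_iff, Set.mem_singleton_iff, Set.mem_union]; tauto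
  rw [this, this, closure_union, closure_union, closure_pair_mul_right, closure_pair_mul_left]

end Subgroup

theorem Set.BijOn.natCard_add_one {X Y : Type*} [Finite X] {F : X → Y} {x₀ : X}
    (h : Set.BijOn F {x₀}ᶜ Set.univ) : Nat.card Y + 1 = Nat.card X := by
  rw [← Set.ncard_univ, ← h.image_eq, h.injOn.ncard_image, ← Set.ncard_univ X,
    Set.compl_eq_univ_sdiff, Set.ncard_sdiff_singleton_add_one (Set.mem_univ x₀)]

namespace Equiv.Perm

variable {α : Type*}

/-- The classes of the equivalence relation generated by `genRel S` are the orbits of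
`Subgroup.closure S`. -/
def genRel (S : Set (Perm α)) (i j : α) : Prop := ∃ σ ∈ S, σ i = j

def orbitOf (S : Set (Perm α)) (i : α) : Quot (genRel S) := Quot.mk _ i

noncomputable def numOrbits (S : Set (Perm α)) : ℕ := Nat.card (Quot (genRel S))

variable {S T : Set (Perm α)} {σ : Perm α} {i j x y : α}

theorem orbitOf_surjective (S : Set (Perm α)) : Function.Surjective (orbitOf S) :=
  Quot.mk_surjective

theorem orbitOf_apply (hσ : σ ∈ S) (i : α) : orbitOf S (σ i) = orbitOf S i :=
  (Quot.sound ⟨σ, hσ, rfl⟩).symm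

theorem orbitOf_apply_of_mem_closure (hσ : σ ∈ Subgroup.closure S) (i : α) :
    orbitOf S (σ i) = orbitOf S i := by
  induction hσ using Subgroup.closure_induction generalizing i with
  | mem τ hτ => exact orbitOf_apply hτ i
  | one => rfl
  | mul τ ρ _ _ hτ hρ => rw [Perm.mul_apply, hτ, hρ]
  | inv τ _ hτ => simpa using (hτ (τ⁻¹ i)).symm

def orbitsMap (h : ∀ σ ∈ T, ∀ i, orbitOf S (σ i) = orbitOf S i) :
    Quot (genRel T) → Quot (genRel S) :=
  Quot.lift (orbitOf S) fun _ _ ⟨_, hσ, hi⟩ => hi ▸ (h _ hσ _).symm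

theorem orbitOf_eq_of_forall (h : ∀ σ ∈ T, ∀ i, orbitOf S (σ i) = orbitOf S i)
    (hij : orbitOf T i = orbitOf T j) : orbitOf S i = orbitOf S j :=
  congrArg (orbitsMap h) hij

theorem orbitOf_eq_of_subset (hST : S ⊆ T) (hij : orbitOf S i = orbitOf S j) :
    orbitOf T i = orbitOf T j :=
  orbitOf_eq_of_forall (fun _ hσ i => orbitOf_apply (hST hσ) i) hij

theorem orbitOf_swap_apply [DecidableEq α] (h : orbitOf S x = orbitOf S y) (i : α) :
    orbitOf S (swap x y i) = orbitOf S i := by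
  rw [swap_apply_def]
  split_ifs with hx hy
  · rw [hx, h]
  · rw [hy, h]
  · rfl

theorem orbitOf_singleton_eq_iff : orbitOf {σ} i = orbitOf {σ} j ↔ σ.SameCycle i j := by
  constructor
  · intro h
    let f : α → Quotient (SameCycle.setoid σ) := Quotient.mk _
    have hf : ∀ i j, genRel {σ} i j → f i = f j := by
      rintro i j ⟨τ, rfl, rfl⟩
      exact Quotient.sound (sameCycle_apply_right.2 (SameCycle.refl _ i))
    exact Quotient.exact (congrArg (Quot.lift f hf) h)
  · rintro ⟨k, rfl⟩
    exact (orbitOf_apply_of_mem_closure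
      (zpow_mem (Subgroup.mem_closure_singleton_self σ) k) i).symm

theorem numOrbits_singleton_one : numOrbits ({1} : Set (Perm α)) = Nat.card α := by
  refine (Nat.card_eq_of_bijective (orbitOf {1}) ⟨fun i j h => ?_, orbitOf_surjective _⟩).symm
  simpa using orbitOf_singleton_eq_iff.1 h

section Finite

variable [Finite α]

theorem numOrbits_le (h : ∀ σ ∈ T, ∀ i, orbitOf S (σ i) = orbitOf S i) :
    numOrbits S ≤ numOrbits T :=
  Nat.card_le_card_of_surjective (orbitsMap h) fun o => by
    obtain ⟨i, rfl⟩ := orbitOf_surjective S o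
    exact ⟨orbitOf T i, rfl⟩

theorem numOrbits_le_of_subset (hST : S ⊆ T) : numOrbits T ≤ numOrbits S :=
  numOrbits_le fun _ hσ i => orbitOf_apply (hST hσ) i

theorem numOrbits_congr (h : Subgroup.closure S = Subgroup.closure T) :
    numOrbits S = numOrbits T :=
  have (U V : Set (Perm α)) (h : Subgroup.closure U = Subgroup.closure V) :
      numOrbits U ≤ numOrbits V :=
    numOrbits_le fun _ hσ => orbitOf_apply_of_mem_closure (h ▸ Subgroup.subset_closure hσ)
  le_antisymm (this S T h) (this T S h.symm)

theorem numOrbits_insert_swap_of_eq [DecidableEq α] (h : orbitOf S x = orbitOf S y) :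
    numOrbits (insert (swap x y) S) = numOrbits S := by
  refine le_antisymm (numOrbits_le_of_subset (Set.subset_insert _ _)) (numOrbits_le ?_)
  rintro σ (rfl | hσ) i
  · exact orbitOf_swap_apply h i
  · exact orbitOf_apply hσ i

/-- Redirecting the orbit of `y` to that of `x` inverts the induced map of orbit spaces away
from `orbitOf S y`. -/
theorem numOrbits_insert_swap_add_one [DecidableEq α] (h : orbitOf S x ≠ orbitOf S y) :
    numOrbits (insert (swap x y) S) + 1 = numOrbits S := by
  classical
  set T := insert (swap x y) S
  have hST : S ⊆ T := Set.subset_insert _ _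
  let g (i : α) : Quot (genRel S) := if orbitOf S i = orbitOf S y then orbitOf S x else orbitOf S i
  have hg : ∀ i j, genRel T i j → g i = g j := by
    rintro i j ⟨σ, rfl | hσ, rfl⟩
    · rw [swap_apply_def]
      split_ifs <;> simp [g, *]
    · simp only [g, orbitOf_apply hσ]
  refine Set.BijOn.natCard_add_one (F := orbitsMap fun _ hσ i => orbitOf_apply (hST hσ) i)
    (x₀ := orbitOf S y) ⟨fun _ _ => trivial, fun o ho o' ho' hoo' => ?_, fun o _ => ?_⟩
  · obtain ⟨i, rfl⟩ := orbitOf_surjective S o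
    obtain ⟨j, rfl⟩ := orbitOf_surjective S o'
    have : g i = g j := congrArg (Quot.lift g hg) hoo'
    simpa only [g, if_neg (Set.mem_compl_singleton_iff.1 ho),
      if_neg (Set.mem_compl_singleton_iff.1 ho')] using this
  · obtain ⟨i, rfl⟩ := orbitOf_surjective T o
    by_cases hi : orbitOf S i = orbitOf S y
    · refine ⟨orbitOf S x, h, ?_⟩
      calc orbitOf T x = orbitOf T (swap x y x) := (orbitOf_apply (Set.mem_insert _ _) x).symm
        _ = orbitOf T i := by rw [swap_apply_left, orbitOf_eq_of_subset hST hi]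
    · exact ⟨orbitOf S i, hi, rfl⟩

theorem numOrbits_le_insert_swap_add_one [DecidableEq α] (S : Set (Perm α)) (x y : α) :
    numOrbits S ≤ numOrbits (insert (swap x y) S) + 1 := by
  by_cases h : orbitOf S x = orbitOf S y
  · rw [numOrbits_insert_swap_of_eq h]; omega
  · rw [← numOrbits_insert_swap_add_one h]

/-- The `σ * swap x y`-orbit of `x` runs through the `σ`-cycle of `y` until it reaches `y`. -/
theorem sameCycle_mul_swap_of_not_sameCycle [DecidableEq α] (h : ¬σ.SameCycle x y) :
    (σ * swap x y).SameCycle x y := by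
  set τ := σ * swap x y
  by_contra hτ
  have key : ∀ k : ℕ, σ.SameCycle y ((τ ^ (k + 1)) x) := by
    intro k
    induction k with
    | zero => simp [τ, sameCycle_apply_right, SameCycle.refl]
    | succ k ih =>
      set z := (τ ^ (k + 1)) x
      have hzx : z ≠ x := fun hz => h (hz ▸ ih).symm
      have hzy : z ≠ y := fun hz => hτ (hz ▸ sameCycle_pow_right.2 (SameCycle.refl τ x))
      rw [pow_succ', Perm.mul_apply, show τ z = σ z by simp [τ, swap_apply_of_ne_of_ne hzx hzy]]
      exact sameCycle_apply_right.2 ih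
  have := key (orderOf τ - 1)
  rw [Nat.sub_add_cancel (orderOf_pos τ), pow_orderOf_eq_one, Perm.one_apply] at this
  exact h this.symm

theorem numOrbits_swap_apply_mul [DecidableEq α] {v : Perm α} {b : α} (hb : v b ≠ b) :
    numOrbits {swap b (v b) * v} = numOrbits {v} + 1 := by
  have hfix : orbitOf {swap b (v b) * v} b ≠ orbitOf {swap b (v b) * v} (v b) := fun h =>
    hb ((orbitOf_singleton_eq_iff.1 h).eq_of_left (by simp [Function.IsFixedPt])).symm
  rw [← numOrbits_insert_swap_add_one hfix, numOrbits_congr (Subgroup.closure_pair_mul_left _ _),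
    numOrbits_insert_swap_of_eq (orbitOf_apply (Set.mem_singleton v) b).symm]

end Finite

section Fintype

variable [Fintype α]

/-- The genus of the hypermap `(u, v, (u * v)⁻¹)` is nonnegative. Induction on `v`: replacing
`(u, v)` by `(u * t, t * v)` with `t = swap b (v b)` keeps `u * v`, splits `b` off as a fixed
point of `t * v`, and changes `numOrbits {u}` by at most the change in `numOrbits {u, v}`. -/
theorem numOrbits_add_numOrbits_add_numOrbits_mul_le [DecidableEq α] (u v : Perm α) :
    numOrbits {u} + numOrbits {v} + numOrbits {u * v} ≤
      Fintype.card α + 2 * numOrbits {u, v} := by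
  induction hN : v.support.card using Nat.strong_induction_on generalizing u v with
  | _ N ih =>
  by_cases hv : v = 1
  · subst hv
    have : numOrbits {u, 1} = numOrbits {u} := by
      rw [Set.pair_comm]
      exact numOrbits_congr (Subgroup.closure_insert_one _)
    rw [mul_one, numOrbits_singleton_one, Nat.card_eq_fintype_card, this]
    omega
  obtain ⟨b, hb⟩ : ∃ b, v b ≠ b := by
    by_contra! h
    exact hv (Perm.ext h)
  set t := swap b (v b)
  have IH := ih _ (hN ▸ card_support_swap_mul hb) (u * t) (t * v) rfl
  rw [show u * t * (t * v) = u * v by rw [mul_assoc, swap_mul_self_mul], numOrbits_swap_apply_mul hb]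
    at IH
  have hpair : numOrbits {t, u * t, t * v} = numOrbits {u, v} := by
    rw [numOrbits_congr (Subgroup.closure_triple_mul u v t), numOrbits_insert_swap_of_eq
      (orbitOf_eq_of_subset (by simp) (orbitOf_apply (Set.mem_singleton v) b).symm)]
  have hu : numOrbits {t, u * t} = numOrbits {t, u} :=
    numOrbits_congr (Subgroup.closure_pair_mul_right _ _)
  by_cases hbt : orbitOf {u * t, t * v} b = orbitOf {u * t, t * v} (v b)
  · have : numOrbits {t, u * t, t * v} = numOrbits {u * t, t * v} :=
      numOrbits_insert_swap_of_eq hbt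
    have : numOrbits {t, u * t} ≤ numOrbits {u * t} :=
      numOrbits_le_of_subset (Set.subset_insert t {u * t})
    have : numOrbits {u} ≤ numOrbits {t, u} + 1 := numOrbits_le_insert_swap_add_one {u} b (v b)
    omega
  · have : numOrbits {t, u * t, t * v} + 1 = numOrbits {u * t, t * v} :=
      numOrbits_insert_swap_add_one hbt
    have hnot : ¬(u * t).SameCycle b (v b) := fun h =>
      hbt (orbitOf_eq_of_subset (by simp) (orbitOf_singleton_eq_iff.2 h))
    have hmerge := sameCycle_mul_swap_of_not_sameCycle hnot
    rw [mul_swap_mul_self] at hmerge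
    have : numOrbits {t, u} = numOrbits {u} :=
      numOrbits_insert_swap_of_eq (orbitOf_singleton_eq_iff.2 hmerge)
    have : numOrbits {t, u * t} + 1 = numOrbits {u * t} :=
      numOrbits_insert_swap_add_one fun h => hnot (orbitOf_singleton_eq_iff.1 h)
    omega

theorem card_image_eq_numOrbits {β : Type*} [DecidableEq β] {S : Set (Perm α)}
    {f : α → β} (hf : ∀ i j, f i = f j ↔ orbitOf S i = orbitOf S j) :
    (univ.image f).card = numOrbits S := by
  let F : Quot (genRel S) → univ.image f :=
    Quot.lift (fun i => ⟨f i, mem_image_of_mem f (mem_univ i)⟩) fun i j hij =>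
      Subtype.ext ((hf i j).2 (Quot.sound hij))
  have hF : Function.Bijective F := by
    refine ⟨fun o o' h => ?_, fun ⟨b, hb⟩ => ?_⟩
    · obtain ⟨i, rfl⟩ := orbitOf_surjective S o
      obtain ⟨j, rfl⟩ := orbitOf_surjective S o'
      exact (hf i j).1 (congrArg Subtype.val h)
    · obtain ⟨i, -, rfl⟩ := mem_image.1 hb
      exact ⟨orbitOf S i, rfl⟩
  rw [numOrbits, Nat.card_eq_of_bijective F hF, Nat.card_eq_fintype_card, Fintype.card_coe]

end Fintype

end Equiv.Perm

namespace GW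

open Equiv.Perm

variable {m n : ℕ}

section Cycles

variable {x : GW m n} {C D : Finset (Fin n)} {i j : Fin n}

theorem mem_cycleOf : j ∈ x.cycleOf i ↔ x.perm.SameCycle i j := by
  simp [cycleOf]

theorem mem_cycles : C ∈ cycles x ↔ ∃ i, x.cycleOf i = C := by
  simp [cycles]

theorem cycleOf_mem_cycles (x : GW m n) (i : Fin n) : x.cycleOf i ∈ cycles x :=
  mem_cycles.2 ⟨i, rfl⟩

theorem mem_cycleOf_self (x : GW m n) (i : Fin n) : i ∈ x.cycleOf i :=
  mem_cycleOf.2 (SameCycle.refl _ _)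

theorem cycleOf_eq_cycleOf_iff : x.cycleOf i = x.cycleOf j ↔ x.perm.SameCycle i j := by
  refine ⟨fun h => mem_cycleOf.1 (h ▸ mem_cycleOf_self x j), fun h => ?_⟩
  ext k
  simp only [mem_cycleOf]
  exact ⟨h.symm.trans, h.trans⟩

theorem eq_cycleOf_of_mem (hC : C ∈ cycles x) (hi : i ∈ C) : C = x.cycleOf i := by
  obtain ⟨j, rfl⟩ := mem_cycles.1 hC
  exact cycleOf_eq_cycleOf_iff.2 (mem_cycleOf.1 hi)

theorem nonempty_of_mem_cycles (hC : C ∈ cycles x) : C.Nonempty := by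
  obtain ⟨j, rfl⟩ := mem_cycles.1 hC
  exact ⟨j, mem_cycleOf_self x j⟩

theorem disjoint_of_mem_cycles (hC : C ∈ cycles x) (hD : D ∈ cycles x) (hCD : C ≠ D) :
    Disjoint C D :=
  disjoint_left.2 fun _ hiC hiD =>
    hCD ((eq_cycleOf_of_mem hC hiC).trans (eq_cycleOf_of_mem hD hiD).symm)

theorem numCycles_eq_numOrbits (x : GW m n) : numCycles x = numOrbits {x.perm} :=
  card_image_eq_numOrbits fun _ _ => cycleOf_eq_cycleOf_iff.trans orbitOf_singleton_eq_iff.symm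

theorem orbitOf_eq_of_mem_cycleOf {S : Set (Perm (Fin n))} (hx : x.perm ∈ Subgroup.closure S)
    (hj : j ∈ x.cycleOf i) : orbitOf S j = orbitOf S i := by
  obtain ⟨k, rfl⟩ := mem_cycleOf.1 hj
  exact orbitOf_apply_of_mem_closure (zpow_mem hx k) i

theorem image_orbitOf_cycleOf {S : Set (Perm (Fin n))} (hx : x.perm ∈ Subgroup.closure S) :
    orbitOf S '' ↑(x.cycleOf i) = {orbitOf S i} := by
  ext o
  simp only [Set.mem_image, mem_coe, Set.mem_singleton_iff]
  exact ⟨fun ⟨j, hj, hjo⟩ => hjo ▸ orbitOf_eq_of_mem_cycleOf hx hj,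
    fun ho => ⟨i, mem_cycleOf_self x i, ho.symm⟩⟩

theorem sum_supp_wt {B : Finset (Finset (Fin n))} (hB : B ⊆ cycles x) :
    ∑ i ∈ supp B, x.wt i = ∑ C ∈ B, cycWt x C := by
  rw [supp, sup_eq_biUnion]
  exact sum_biUnion fun C hC D hD hCD => disjoint_of_mem_cycles (hB hC) (hB hD) hCD

theorem supp_filter_subset {A : Finset (Fin n)} (hA : ∀ i ∈ A, x.cycleOf i ⊆ A) :
    supp ((cycles x).filter (· ⊆ A)) = A := by
  ext i
  simp only [supp, mem_sup, mem_filter, id]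
  exact ⟨fun ⟨C, ⟨_, hCA⟩, hiC⟩ => hCA hiC,
    fun hi => ⟨_, ⟨cycleOf_mem_cycles x i, hA i hi⟩, mem_cycleOf_self x i⟩⟩

theorem sum_wt_eq_sum_cycWt {A : Finset (Fin n)} (hA : ∀ i ∈ A, x.cycleOf i ⊆ A) :
    ∑ i ∈ A, x.wt i = ∑ C ∈ (cycles x).filter (· ⊆ A), cycWt x C := by
  conv_lhs => rw [← supp_filter_subset hA]
  exact sum_supp_wt (filter_subset _ _)

theorem sum_mul_wt (y : GW m n) {A : Finset (Fin n)} (hA : ∀ i, x.perm i ∈ A ↔ i ∈ A) :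
    ∑ i ∈ A, (x * y).wt i = ∑ i ∈ A, x.wt i + ∑ i ∈ A, y.wt i := by
  simp only [mul_wt, sum_add_distrib, add_right_inj]
  exact sum_equiv x.perm⁻¹ (fun i => by rw [← hA (x.perm⁻¹ i)]; simp) fun _ _ => rfl

end Cycles

section Parts

variable {u w : GW m n} {B B' : Finset (Finset (Fin n))} {C C' : Finset (Fin n)} {i j : Fin n}

theorem mem_piPart : C' ∈ piPart u w C ↔ C' ∈ cycles w ∧ piRel u w C C' := by
  classical
  simp [piPart]

theorem piPart_eq_piPart_iff (hC' : C' ∈ cycles w) :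
    piPart u w C = piPart u w C' ↔ piRel u w C C' := by
  refine ⟨fun h => (mem_piPart.1 (h ▸ mem_piPart.2 ⟨hC', .refl _⟩)).2, fun h => ?_⟩
  ext D
  simp only [mem_piPart]
  exact and_congr_right fun _ =>
    ⟨fun hD => (Relation.EqvGen.symm _ _ h).trans _ _ _ hD, fun hD => h.trans _ _ _ hD⟩

theorem mem_piPart_iff :
    C' ∈ piPart u w C ↔ C' ∈ cycles w ∧ piPart u w C' = piPart u w C := by
  rw [mem_piPart]
  exact and_congr_right fun hC' => by rw [eq_comm, piPart_eq_piPart_iff hC']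

theorem mem_piParts : B ∈ piParts u w ↔ ∃ i, piPart u w (w.cycleOf i) = B := by
  simp [piParts, cycles]

theorem piRelBase_cycleOf_apply (i : Fin n) :
    piRelBase u w (w.cycleOf i) (w.cycleOf (u.perm i)) :=
  ⟨cycleOf_mem_cycles w i, cycleOf_mem_cycles w _, u.cycleOf i, cycleOf_mem_cycles u i,
    ⟨i, mem_inter.2 ⟨mem_cycleOf_self u i, mem_cycleOf_self w i⟩⟩,
    ⟨u.perm i, mem_inter.2 ⟨mem_cycleOf.2 (sameCycle_apply_right.2 (.refl _ _)),
      mem_cycleOf_self w _⟩⟩⟩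

theorem piPart_cycleOf_eq_iff :
    piPart u w (w.cycleOf i) = piPart u w (w.cycleOf j) ↔
      orbitOf {u.perm, w.perm} i = orbitOf {u.perm, w.perm} j := by
  set S : Set (Perm (Fin n)) := {u.perm, w.perm}
  have hu : u.perm ∈ Subgroup.closure S := Subgroup.subset_closure (by simp [S])
  have hw : w.perm ∈ Subgroup.closure S := Subgroup.subset_closure (by simp [S])
  constructor
  · intro h
    let κ : Finset (Fin n) → Set (Quot (genRel S)) := fun C => orbitOf S '' C
    have hκ : ∀ C C', piRelBase u w C C' → κ C = κ C' := by
      rintro C C' ⟨hC, hC', D, hD, ⟨p, hp⟩, ⟨q, hq⟩⟩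
      rw [mem_inter] at hp hq
      simp only [κ, eq_cycleOf_of_mem hC hp.2, eq_cycleOf_of_mem hC' hq.2,
        image_orbitOf_cycleOf hw, orbitOf_eq_of_mem_cycleOf hu (eq_cycleOf_of_mem hD hp.1 ▸ hq.1)]
    have := congrArg (Quot.lift κ hκ)
      (Quot.eqvGen_sound ((piPart_eq_piPart_iff (cycleOf_mem_cycles w j)).1 h))
    simpa [κ, image_orbitOf_cycleOf hw] using this
  · intro h
    let f : Fin n → Finset (Finset (Fin n)) := fun i => piPart u w (w.cycleOf i)
    have hf : ∀ i j, genRel S i j → f i = f j := by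
      rintro i _ ⟨σ, rfl | rfl, rfl⟩
      · exact (piPart_eq_piPart_iff (cycleOf_mem_cycles _ _)).2
          (.rel _ _ (piRelBase_cycleOf_apply i))
      · exact congrArg (piPart u w)
          (cycleOf_eq_cycleOf_iff.2 (sameCycle_apply_right.2 (.refl _ _)))
    exact congrArg (Quot.lift f hf) h

theorem card_piParts (u w : GW m n) : (piParts u w).card = numOrbits {u.perm, w.perm} := by
  rw [piParts, cycles, image_image]
  exact card_image_eq_numOrbits fun _ _ => piPart_cycleOf_eq_iff

theorem mem_supp_piPart :
    j ∈ supp (piPart u w (w.cycleOf i)) ↔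
      orbitOf {u.perm, w.perm} i = orbitOf {u.perm, w.perm} j := by
  simp only [supp, mem_sup, id]
  constructor
  · rintro ⟨C, hC, hj⟩
    obtain ⟨hCw, hCeq⟩ := mem_piPart_iff.1 hC
    rw [eq_cycleOf_of_mem hCw hj] at hCeq
    exact piPart_cycleOf_eq_iff.1 hCeq.symm
  · intro h
    exact ⟨w.cycleOf j, mem_piPart_iff.2 ⟨cycleOf_mem_cycles w j,
      (piPart_cycleOf_eq_iff.2 h).symm⟩, mem_cycleOf_self w j⟩

theorem eq_of_mem_supp (hB : B ∈ piParts u w) (hB' : B' ∈ piParts u w) (hj : j ∈ supp B)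
    (hj' : j ∈ supp B') : B = B' := by
  obtain ⟨i, rfl⟩ := mem_piParts.1 hB
  obtain ⟨i', rfl⟩ := mem_piParts.1 hB'
  exact piPart_cycleOf_eq_iff.2 ((mem_supp_piPart.1 hj).trans (mem_supp_piPart.1 hj').symm)

theorem piPart_subset_cycles : piPart u w C ⊆ cycles w := fun _ hD => (mem_piPart.1 hD).1

theorem nonempty_of_mem_piParts (hB : B ∈ piParts u w) : B.Nonempty := by
  obtain ⟨i, rfl⟩ := mem_piParts.1 hB
  exact ⟨_, mem_piPart_iff.2 ⟨cycleOf_mem_cycles w i, rfl⟩⟩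

theorem sum_piParts {β : Type*} [AddCommMonoid β] (u w : GW m n) (f : Finset (Fin n) → β) :
    ∑ B ∈ piParts u w, ∑ C ∈ B, f C = ∑ C ∈ cycles w, f C := by
  classical
  rw [← sum_fiberwise_of_maps_to (g := piPart u w) fun C hC => mem_image_of_mem _ hC]
  refine sum_congr rfl fun B hB => ?_
  obtain ⟨C₀, -, rfl⟩ := mem_image.1 hB
  congr 1
  ext C
  rw [mem_filter, mem_piPart_iff]

end Parts

section Weights

variable {u w : GW m n} {B : Finset (Finset (Fin n))}

def nzCycles (x : GW m n) : Finset (Finset (Fin n)) := (cycles x).filter fun C => cycWt x C ≠ 0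

theorem codimfix_eq_sub_numCycles_add (x : GW m n) :
    (codimfix x : ℤ) = n - numCycles x + (nzCycles x).card := by
  have hsplit : c0 x + (nzCycles x).card = numCycles x := card_filter_add_card_filter_not _
  have hle : numCycles x ≤ n := card_image_le.trans (by simp)
  rw [codimfix, Nat.cast_sub (by omega)]
  omega

theorem exists_nzCycles_subset_supp (hB : B ∈ piParts u w) (h : partWt w B ≠ 0) :
    (∃ C ∈ nzCycles u, C ⊆ supp B) ∨ ∃ C ∈ nzCycles (u⁻¹ * w), C ⊆ supp B := by
  obtain ⟨i, rfl⟩ := mem_piParts.1 hB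
  set A := supp (piPart u w (w.cycleOf i))
  have hu : u.perm ∈ Subgroup.closure {u.perm, w.perm} := Subgroup.subset_closure (by simp)
  have hv : (u⁻¹ * w).perm ∈ Subgroup.closure {u.perm, w.perm} :=
    mul_mem (inv_mem hu) (Subgroup.subset_closure (by simp))
  have hsum {x : GW m n} (hx : x.perm ∈ Subgroup.closure {u.perm, w.perm})
      (hnz : ¬∃ C ∈ nzCycles x, C ⊆ A) :
      ∑ j ∈ A, x.wt j = 0 := by
    have hA : ∀ j ∈ A, x.cycleOf j ⊆ A := fun j hj k hk =>
      mem_supp_piPart.2 ((mem_supp_piPart.1 hj).trans (orbitOf_eq_of_mem_cycleOf hx hk).symm)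
    rw [sum_wt_eq_sum_cycWt hA]
    refine sum_eq_zero fun C hC => ?_
    by_contra hne
    exact hnz ⟨C, mem_filter.2 ⟨(mem_filter.1 hC).1, hne⟩, (mem_filter.1 hC).2⟩
  by_contra hcon
  apply h
  calc partWt w (piPart u w (w.cycleOf i)) = ∑ j ∈ A, (u * (u⁻¹ * w)).wt j := by
        rw [mul_inv_cancel_left, sum_supp_wt piPart_subset_cycles, partWt]
    _ = ∑ j ∈ A, u.wt j + ∑ j ∈ A, (u⁻¹ * w).wt j :=
        sum_mul_wt _ fun j => by simp only [A, mem_supp_piPart, orbitOf_apply_of_mem_closure hu]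
    _ = 0 := by rw [hsum hu (not_or.1 hcon).1, hsum hv (not_or.1 hcon).2, add_zero]

theorem card_filter_piParts_le (x : GW m n) :
    ((piParts u w).filter fun B => ∃ C ∈ nzCycles x, C ⊆ supp B).card ≤
      (nzCycles x).card := by
  refine card_le_card_of_forall_subsingleton (fun B C => C ⊆ supp B)
    (fun B hB => (mem_filter.1 hB).2) fun C hC B ⟨hB, hCB⟩ B' ⟨hB', hCB'⟩ => ?_
  obtain ⟨j, hj⟩ := nonempty_of_mem_cycles (mem_filter.1 hC).1
  exact eq_of_mem_supp (mem_filter.1 hB).1 (mem_filter.1 hB').1 (hCB hj) (hCB' hj)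

theorem piPartsNonzeroWt_le (u w : GW m n) :
    piPartsNonzeroWt u w ≤ (nzCycles u).card + (nzCycles (u⁻¹ * w)).card := by
  classical
  refine (card_le_card fun B hB => ?_).trans ((card_union_le _ _).trans
    (add_le_add (card_filter_piParts_le (u := u) (w := w) u)
      (card_filter_piParts_le (u := u) (w := w) (u⁻¹ * w))))
  obtain ⟨hB, hwt⟩ := mem_filter.1 hB
  rcases exists_nzCycles_subset_supp hB hwt with h | h
  · exact mem_union_left _ (mem_filter.2 ⟨hB, h⟩)
  · exact mem_union_right _ (mem_filter.2 ⟨hB, h⟩)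

end Weights

theorem numCycles_add_numCycles_add_numCycles_le (u w : GW m n) :
    numCycles u + numCycles (u⁻¹ * w) + numCycles w ≤ n + 2 * (piParts u w).card := by
  have h := numOrbits_add_numOrbits_add_numOrbits_mul_le u.perm (u⁻¹ * w).perm
  have hS : numOrbits {u.perm, (u⁻¹ * w).perm} = numOrbits {u.perm, w.perm} := by
    rw [mul_perm, inv_perm, numOrbits_congr (Subgroup.closure_pair_inv_mul _ _)]
  rw [show u.perm * (u⁻¹ * w).perm = w.perm by simp, Fintype.card_fin, hS] at h
  simpa only [numCycles_eq_numOrbits, card_piParts] using h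

theorem le_codimfix_add_codimfix (u w : GW m n) :
    (n : ℤ) + numCycles w - 2 * (piParts u w).card + piPartsNonzeroWt u w ≤
      codimfix u + codimfix (u⁻¹ * w) := by
  have := numCycles_add_numCycles_add_numCycles_le u w
  have := piPartsNonzeroWt_le u w
  rw [codimfix_eq_sub_numCycles_add, codimfix_eq_sub_numCycles_add]
  omega

section Defect

/-- Summed over the parts of `Π_u(w)`, the gap in `codimfix w ≤ n + c(w) - 2 |Π_u(w)| + N`. -/
def partDefect (w : GW m n) (B : Finset (Finset (Fin n))) : ℤ :=
  2 * ((B.card : ℤ) - 1) + (if partWt w B = 0 then 0 else 1) -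
    ((B.filter fun C => cycWt w C ≠ 0).card : ℤ)

variable {w : GW m n} {B : Finset (Finset (Fin n))}

theorem partDefect_singleton (C : Finset (Fin n)) : partDefect w {C} = 0 := by
  by_cases h : cycWt w C = 0 <;> simp [partDefect, partWt, filter_singleton, h]

theorem partDefect_nonneg (hB : B.Nonempty) : 0 ≤ partDefect w B := by
  by_cases h1 : B.card = 1
  · obtain ⟨C, rfl⟩ := card_eq_one.1 h1
    exact (partDefect_singleton C).ge
  have := card_pos.2 hB
  have := card_filter_le B fun C => cycWt w C ≠ 0
  unfold partDefect
  split_ifs <;> omega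

theorem eq_singleton_or_pair_of_partDefect_eq_zero (hB : B.Nonempty) (h : partDefect w B = 0) :
    (∃ C, B = {C}) ∨
      ∃ C₁ C₂, C₁ ≠ C₂ ∧ B = {C₁, C₂} ∧
        cycWt w C₁ ≠ 0 ∧ cycWt w C₂ ≠ 0 ∧ cycWt w C₁ + cycWt w C₂ = 0 := by
  by_cases h1 : B.card = 1
  · exact Or.inl (card_eq_one.1 h1)
  right
  have := card_pos.2 hB
  have hle := card_filter_le B fun C => cycWt w C ≠ 0
  unfold partDefect at h
  have hwt : partWt w B = 0 := by
    by_contra hne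
    rw [if_neg hne] at h
    omega
  rw [if_pos hwt] at h
  obtain ⟨C₁, C₂, hne, rfl⟩ := card_eq_two.1 (by omega : B.card = 2)
  have hnz : ∀ C ∈ ({C₁, C₂} : Finset _), cycWt w C ≠ 0 :=
    filter_eq_self.1 (eq_of_subset_of_card_le (filter_subset _ _) (by omega))
  exact ⟨C₁, C₂, hne, rfl, hnz C₁ (by simp), hnz C₂ (by simp),
    by rwa [partWt, sum_pair hne] at hwt⟩

end Defect

theorem codimfix_add_sum_partDefect (u w : GW m n) :
    (codimfix w : ℤ) + ∑ B ∈ piParts u w, partDefect w B =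
      n + numCycles w - 2 * (piParts u w).card + piPartsNonzeroWt u w := by
  classical
  have hcard : ∑ B ∈ piParts u w, (B.card : ℤ) = numCycles w := by
    simpa [numCycles] using sum_piParts u w fun _ => (1 : ℤ)
  have hnz : ∑ B ∈ piParts u w, ((B.filter fun C => cycWt w C ≠ 0).card : ℤ) =
      (nzCycles w).card := by
    simpa [natCast_card_filter, nzCycles] using
      sum_piParts u w fun C => if cycWt w C ≠ 0 then (1 : ℤ) else 0
  have hwt : ∑ B ∈ piParts u w, (if partWt w B = 0 then (0 : ℤ) else 1) =
      piPartsNonzeroWt u w := by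
    rw [piPartsNonzeroWt, natCast_card_filter]
    exact sum_congr rfl fun B _ => by split_ifs <;> simp_all
  simp only [partDefect, sum_sub_distrib, sum_add_distrib, ← mul_sum, hcard, hnz, hwt,
    codimfix_eq_sub_numCycles_add, sum_const, nsmul_eq_mul, mul_one]
  ring

end GW

theorem stmt9_general (m p n : ℕ) (hpm : p ∣ m)
    (u w : GW m n)
    (hu : u ∈ GW.interval p hpm GW.codimfix w) :
    ((GW.codimfix u : ℤ) + (GW.codimfix (u⁻¹ * w) : ℤ) =
      (n : ℤ) + (GW.numCycles w : ℤ) - 2 * ((GW.piParts u w).card : ℤ) +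
        (GW.piPartsNonzeroWt u w : ℤ)) ∧
    (∀ B ∈ GW.piParts u w,
      (∃ C, B = {C}) ∨
      (∃ C₁ C₂, C₁ ≠ C₂ ∧ B = {C₁, C₂} ∧ GW.cycWt w C₁ ≠ 0 ∧ GW.cycWt w C₂ ≠ 0 ∧
        GW.cycWt w C₁ + GW.cycWt w C₂ = 0)) := by
  have hcodim : (GW.codimfix u : ℤ) + GW.codimfix (u⁻¹ * w) = GW.codimfix w := by
    exact_mod_cast hu.2
  have hlower := GW.le_codimfix_add_codimfix u w
  have hdefect := GW.codimfix_add_sum_partDefect u w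
  have hnonneg : ∀ B ∈ GW.piParts u w, 0 ≤ GW.partDefect w B :=
    fun B hB => GW.partDefect_nonneg (GW.nonempty_of_mem_piParts hB)
  have hzero : ∑ B ∈ GW.piParts u w, GW.partDefect w B = 0 :=
    le_antisymm (by linarith) (sum_nonneg hnonneg)
  refine ⟨by linarith, fun B hB => GW.eq_singleton_or_pair_of_partDefect_eq_zero
    (GW.nonempty_of_mem_piParts hB) ((sum_eq_zero_iff_of_nonneg hnonneg).1 hzero B hB)⟩

/-- Let `w ∈ G(m,p,n)` and `u ∈ [id, w]_{cdf}`.  Then: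
(1) `codimfix(u) + codimfix(u⁻¹w) = n + c(w) − 2|Π_u(w)| + #{parts of Π_u(w) of nonzero weight}`;
(2) every part of `Π_u(w)` is either a singleton or consists of exactly two cycles of `w`
whose weights are nonzero and sum to `0` in `ℤ/mℤ`. -/
theorem stmt9 (m p n : ℕ) (hm : 0 < m) (hp : 0 < p) (hn : 0 < n) (hpm : p ∣ m)
    (u w : GW m n) (hw : GW.Gmem p hpm w)
    (hu : u ∈ GW.interval p hpm GW.codimfix w) :
    ((GW.codimfix u : ℤ) + (GW.codimfix (u⁻¹ * w) : ℤ) =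
      (n : ℤ) + (GW.numCycles w : ℤ) - 2 * ((GW.piParts u w).card : ℤ) +
        (GW.piPartsNonzeroWt u w : ℤ)) ∧
    (∀ B ∈ GW.piParts u w,
      (∃ C, B = {C}) ∨
      (∃ C₁ C₂, C₁ ≠ C₂ ∧ B = {C₁, C₂} ∧ GW.cycWt w C₁ ≠ 0 ∧ GW.cycWt w C₂ ≠ 0 ∧
        GW.cycWt w C₁ + GW.cycWt w C₂ = 0)) :=
  stmt9_general m p n hpm u w hu
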